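/- For γ(t,s) = ω_c(1+(ω_c t)²)^{−s/2} Γ(s) sin(s·arctan(ω_c t)) with s > 2, the limit lim_{t→∞} s·arctan(ω_c t) = sπ/2 > π, and by continuity there exists a time interval (t₁,t₂) on which γ(·,s) is strictly negative. -/
import Mathlib


open Filter

noncomputable def decayRate (ωc t s : ℝ) : ℝ :=
  ωc * (1 + (ωc * t) ^ 2) ^ (-(s / 2)) * Real.Gamma s *
    Real.sin (s * Real.arctan (ωc * t))

lemma sin_neg_of_mem_Ioo {x : ℝ} (h1 : Real.pi < x) (h2 : x < 2 * Real.pi) :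
    Real.sin x < 0 := by
  have := Real.sin_pos_of_pos_of_lt_pi (x := x - Real.pi) (by linarith) (by linarith)
  have hx : Real.sin (x - Real.pi) = -Real.sin x := by
    rw [Real.sin_sub, Real.sin_pi, Real.cos_pi]; ring
  linarith [hx ▸ this]

/-- For s > 2: lim_{t→∞} s·arctan(ω_c t) = sπ/2 > π, and by continuity there is a
time interval (t₁, t₂) on which γ(·, s) is strictly negative. -/
theorem decayRate_negative_interval (ωc s : ℝ) (hωc : 0 < ωc) (hs : 2 < s) :
    Tendsto (fun t : ℝ => s * Real.arctan (ωc * t)) atTop (nhds (s * Real.pi / 2)) ∧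
    Real.pi < s * Real.pi / 2 ∧
    ∃ t₁ t₂ : ℝ, 0 < t₁ ∧ t₁ < t₂ ∧
      ∀ t ∈ Set.Ioo t₁ t₂, decayRate ωc t s < 0 := by
  have hπ := Real.pi_pos
  have hs0 : 0 < s := by linarith
  refine ⟨?_, ?_, ?_⟩
  · have h1 : Tendsto (fun t : ℝ => ωc * t) atTop atTop :=
      Tendsto.const_mul_atTop hωc tendsto_id
    have h2 : Tendsto (fun t : ℝ => Real.arctan (ωc * t)) atTop (nhds (Real.pi / 2)) :=
      (Real.tendsto_arctan_atTop.mono_right nhdsWithin_le_nhds).comp h1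
    have := h2.const_mul s
    simpa [mul_div_assoc] using this
  · have : 2 * Real.pi < s * Real.pi :=
      mul_lt_mul_of_pos_right hs hπ
    linarith
  · -- choose angle α ∈ (π, 2π) with α < sπ/2
    set α : ℝ := Real.pi + (min (s * Real.pi / 2) (2 * Real.pi) - Real.pi) / 2 with hα
    have hmin : Real.pi < min (s * Real.pi / 2) (2 * Real.pi) := by
      rcases min_cases (s * Real.pi / 2) (2 * Real.pi) with ⟨h, _⟩ | ⟨h, _⟩ <;> rw [h] <;> nlinarith
    have hα1 : Real.pi < α := by rw [hα]; linarith
    have hα2 : α < 2 * Real.pi := by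
      have := min_le_right (s * Real.pi / 2) (2 * Real.pi)
      rw [hα]; linarith
    have hαs : α < s * Real.pi / 2 := by
      have := min_le_left (s * Real.pi / 2) (2 * Real.pi)
      rw [hα]; linarith
    have hαpos : 0 < α := by linarith
    -- angle α / s ∈ (0, π/2)
    have hdiv1 : 0 < α / s := div_pos hαpos hs0
    have hdiv2 : α / s < Real.pi / 2 := by
      rw [div_lt_iff₀ hs0]
      calc α < s * Real.pi / 2 := hαs
        _ = Real.pi / 2 * s := by ring
    set t₀ : ℝ := Real.tan (α / s) / ωc with ht₀
    have htan : 0 < Real.tan (α / s) := Real.tan_pos_of_pos_of_lt_pi_div_two hdiv1 hdiv2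
    have ht₀pos : 0 < t₀ := div_pos htan hωc
    have harctan : Real.arctan (ωc * t₀) = α / s := by
      rw [ht₀, mul_div_cancel₀ _ (ne_of_gt hωc)]
      exact Real.arctan_tan (by linarith) hdiv2
    have hf : decayRate ωc t₀ s < 0 := by
      unfold decayRate
      rw [harctan, mul_div_cancel₀ _ (ne_of_gt hs0)]
      have hsin : Real.sin α < 0 := sin_neg_of_mem_Ioo hα1 hα2
      have hpow : (0:ℝ) < (1 + (ωc * t₀) ^ 2) ^ (-(s / 2)) :=
        Real.rpow_pos_of_pos (by positivity) _
      have hΓ : 0 < Real.Gamma s := Real.Gamma_pos_of_pos hs0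
      have : 0 < ωc * (1 + (ωc * t₀) ^ 2) ^ (-(s / 2)) * Real.Gamma s := by positivity
      exact mul_neg_of_pos_of_neg this hsin
    have hcont : ContinuousAt (fun t => decayRate ωc t s) t₀ := by
      unfold decayRate
      have hbase : ContinuousAt (fun t : ℝ => 1 + (ωc * t) ^ 2) t₀ := by fun_prop
      have h1 : ContinuousAt (fun t : ℝ => (1 + (ωc * t) ^ 2) ^ (-(s / 2))) t₀ :=
        hbase.rpow_const (Or.inl (by positivity))
      have h2 : ContinuousAt (fun t : ℝ => Real.sin (s * Real.arctan (ωc * t))) t₀ :=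
        Real.continuous_sin.continuousAt.comp
          (continuousAt_const.mul (Real.continuous_arctan.continuousAt.comp (by fun_prop)))
      exact ((continuousAt_const.mul h1).mul continuousAt_const).mul h2
    have := hcont.eventually_lt continuousAt_const hf
    rw [Metric.eventually_nhds_iff] at this
    obtain ⟨ε, hε, hball⟩ := this
    set δ := min ε t₀ with hδ
    have hδ0 : 0 < δ := lt_min hε ht₀pos
    refine ⟨t₀ - δ / 2, t₀ + δ / 2, ?_, by linarith, ?_⟩
    · have : δ ≤ t₀ := min_le_right _ _
      linarith
    · intro t ht
      apply hball
      have h1 := ht.1; have h2 := ht.2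
      have : δ ≤ ε := min_le_left _ _
      rw [Real.dist_eq, abs_lt]
      constructor <;> linarith
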